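/- For the sun graph S_k on n = 2k vertices (k ≥ 3), the zero forcing number equals k = n/2. -/

import Mathlib

/-!
Upper bound: colour `v_0` and every `u_i` except `u_{k-1}` blue. Each `u_i` then forces
`v_{i+1}` around the cycle, and finally `v_0` forces `u_{k-1}`.

Lower bound: a zero forcing set meets every fort, i.e. every nonempty set `W` such that no
vertex outside `W` has exactly one neighbour in `W`. Let `A` be the set of indices `a` with
`u_a` white. For cyclically consecutive `s, t ∈ A`, the set `{u_s, v_{s+1}, …, v_t, u_t}` is a
fort whose only possibly blue vertices are the `v_j` with `j` in the arc `(s, t]`. These arcs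
are disjoint, so at least `|A|` cycle vertices are blue, and the `k - |A|` blue `u_a` give
`k` blue vertices in total.
-/

open SimpleGraph

section ZF
variable {V : Type*}

/-- One round of the zero forcing color change rule applied to the blue set `S`. -/
def forceStep (G : SimpleGraph V) (S : Set V) : Set V :=
  S ∪ {w | ∃ u ∈ S, G.Adj u w ∧ ∀ x, G.Adj u x → x ∉ S → x = w}

/-- `S` is a zero forcing set: repeatedly applying the color change rule turns all
vertices blue; equivalently every forcing-closed superset of `S` is everything. -/
def IsZeroForcingSet (G : SimpleGraph V) (S : Set V) : Prop :=
  ∀ T : Set V, S ⊆ T → forceStep G T ⊆ T → T = Set.univ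

/-- The zero forcing number `Z(G)`. -/
noncomputable def zeroForcingNumber (G : SimpleGraph V) [Fintype V] : ℕ :=
  sInf {n | ∃ S : Finset V, S.card = n ∧ IsZeroForcingSet G ↑S}

/-- The list `l` enumerates an induced path of `G` (a single vertex counts). -/
def IsListPath (G : SimpleGraph V) (l : List V) : Prop :=
  l.Nodup ∧ ∀ i j : Fin l.length,
    (G.Adj (l.get i) (l.get j) ↔ (i.val + 1 = j.val ∨ j.val + 1 = i.val))

/-- The set `P` induces a path in `G`. -/
def IsInducedPathSet (G : SimpleGraph V) (P : Set V) : Prop :=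
  ∃ l : List V, IsListPath G l ∧ {v | v ∈ l} = P

/-- The path cover number `P(G)`: the minimum number of parts in a partition of the
vertex set into sets each inducing a path. -/
noncomputable def pathCoverNumber (G : SimpleGraph V) [Fintype V] [DecidableEq V] : ℕ :=
  sInf {n | ∃ P : Finpartition (Finset.univ : Finset V),
    P.parts.card = n ∧ ∀ p ∈ P.parts, IsInducedPathSet G ↑p}

/-- `G` is 2-connected: at least 3 vertices, connected, and deleting any vertex
leaves a connected graph. -/
def IsTwoConnected (G : SimpleGraph V) [Fintype V] : Prop :=
  3 ≤ Fintype.card V ∧ G.Connected ∧ ∀ v : V, (G.induce {w : V | w ≠ v}).Connected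

/-- `σ` places the vertices of `G` on a circle (in the order given by `Fin`) so that no
two edges, drawn as chords, cross; this witnesses outerplanarity of `G`. -/
def IsOuterplanarEmbedding (G : SimpleGraph V) [Fintype V]
    (σ : V ≃ Fin (Fintype.card V)) : Prop :=
  ∀ a b c d : V, G.Adj a b → G.Adj c d →
    ¬(σ a < σ c ∧ σ c < σ b ∧ σ b < σ d)

/-- A graph is outerplanar iff its vertices can be placed on a circle with all
edges drawn as pairwise non-crossing chords. -/
def IsOuterplanar (G : SimpleGraph V) [Fintype V] : Prop :=
  ∃ σ : V ≃ Fin (Fintype.card V), IsOuterplanarEmbedding G σ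

/-- `v` is the cyclic successor of `u` among the elements of `F`, with respect to the
circular order induced by `σ`. -/
def nextIn {n : ℕ} (σ : V ≃ Fin n) (F : Finset V) (u v : V) : Prop :=
  u ∈ F ∧ v ∈ F ∧ u ≠ v ∧
    ((σ u < σ v ∧ ∀ w ∈ F, σ u < σ w → σ v ≤ σ w) ∨
     ((∀ w ∈ F, σ w ≤ σ u) ∧ (∀ w ∈ F, σ v ≤ σ w)))

/-- `F` is (the vertex set of) a bounded face of the outerplanar embedding `σ` of the
2-connected outerplanar graph `G`: in the circular order, consecutive members of `F`
are exactly the adjacent pairs inside `F` (so `F` spans a chordless polygon). -/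
def IsFace (G : SimpleGraph V) [Fintype V] (σ : V ≃ Fin (Fintype.card V))
    (F : Finset V) : Prop :=
  3 ≤ F.card ∧ ∀ u ∈ F, ∀ v ∈ F,
    (G.Adj u v ↔ (nextIn σ F u v ∨ nextIn σ F v u))

/-- The weak dual of the embedded outerplanar graph `G`: vertices are the bounded
faces, two faces being adjacent iff they share an edge of `G`. -/
def weakDual (G : SimpleGraph V) [Fintype V] (σ : V ≃ Fin (Fintype.card V)) :
    SimpleGraph {F : Finset V // IsFace G σ F} where
  Adj F₁ F₂ := F₁ ≠ F₂ ∧ ∃ u v, G.Adj u v ∧ u ∈ F₁.1 ∧ u ∈ F₂.1 ∧ v ∈ F₁.1 ∧ v ∈ F₂.1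
  symm := ⟨by
    rintro F₁ F₂ ⟨hne, u, v, ha, h1, h2, h3, h4⟩
    exact ⟨hne.symm, u, v, ha, h2, h1, h4, h3⟩⟩
  loopless := ⟨by rintro F ⟨hne, -⟩; exact hne rfl⟩

/-- The degree of a face in the weak dual. -/
noncomputable def dualDeg (G : SimpleGraph V) [Fintype V]
    (σ : V ≃ Fin (Fintype.card V)) (F : {F : Finset V // IsFace G σ F}) : ℕ :=
  ((weakDual G σ).neighborSet F).ncard

/-- A leaf face: a face which is a leaf of the weak dual tree. -/
def IsLeafFace (G : SimpleGraph V) [Fintype V] (σ : V ≃ Fin (Fintype.card V))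
    (F : {F : Finset V // IsFace G σ F}) : Prop :=
  dualDeg G σ F = 1

/-- `n_ℓ`: the number of leaves of the weak dual. -/
noncomputable def numDualLeaves (G : SimpleGraph V) [Fintype V]
    (σ : V ≃ Fin (Fintype.card V)) : ℕ :=
  Nat.card {F : {F : Finset V // IsFace G σ F} // IsLeafFace G σ F}

end ZF

section FT
variable {V : Type*} [Fintype V]

/-- Branch faces: faces of weak-dual degree 2 that are adjacent to a leaf face or to
another branch face. -/
inductive IsBranchFace (G : SimpleGraph V) (σ : V ≃ Fin (Fintype.card V)) :
    {F : Finset V // IsFace G σ F} → Prop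
  | leaf (F F' : {F : Finset V // IsFace G σ F}) :
      dualDeg G σ F = 2 → (weakDual G σ).Adj F F' → IsLeafFace G σ F' →
      IsBranchFace G σ F
  | branch (F F' : {F : Finset V // IsFace G σ F}) :
      dualDeg G σ F = 2 → (weakDual G σ).Adj F F' → IsBranchFace G σ F' →
      IsBranchFace G σ F

/-- Limb faces: faces of weak-dual degree at least 3 adjacent to a leaf or branch face. -/
def IsLimbFace (G : SimpleGraph V) (σ : V ≃ Fin (Fintype.card V))
    (F : {F : Finset V // IsFace G σ F}) : Prop :=
  3 ≤ dualDeg G σ F ∧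
    ∃ F', (weakDual G σ).Adj F F' ∧ (IsLeafFace G σ F' ∨ IsBranchFace G σ F')

/-- Trunk faces: faces of weak-dual degree at least 2 that are adjacent to no leaf
face and no branch face. -/
def IsTrunkFace (G : SimpleGraph V) (σ : V ≃ Fin (Fintype.card V))
    (F : {F : Finset V // IsFace G σ F}) : Prop :=
  2 ≤ dualDeg G σ F ∧
    ∀ F', (weakDual G σ).Adj F F' → ¬(IsLeafFace G σ F' ∨ IsBranchFace G σ F')

/-- The vertices of the foliage of `G`: vertices lying on a leaf, branch, or limb face. -/
def foliageSet (G : SimpleGraph V) (σ : V ≃ Fin (Fintype.card V)) : Set V :=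
  {v | ∃ F : {F : Finset V // IsFace G σ F},
    (IsLeafFace G σ F ∨ IsBranchFace G σ F ∨ IsLimbFace G σ F) ∧ v ∈ F.1}

/-- The vertices of the trunk of `G`: vertices lying on a trunk face. -/
def trunkSet (G : SimpleGraph V) (σ : V ≃ Fin (Fintype.card V)) : Set V :=
  {v | ∃ F : {F : Finset V // IsFace G σ F}, IsTrunkFace G σ F ∧ v ∈ F.1}

/-- Boundary vertices: vertices in both the foliage and the trunk. -/
def boundarySet (G : SimpleGraph V) (σ : V ≃ Fin (Fintype.card V)) : Set V :=
  foliageSet G σ ∩ trunkSet G σ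

end FT

/-- The sun graph `S_k` on `2k` vertices: a cycle `v_0, …, v_{k-1}` (the left
summands) together with vertices `u_0, …, u_{k-1}` (the right summands) where `u_i`
is adjacent to `v_i` and `v_{i+1}` (indices mod `k`). -/
def sunGraph (k : ℕ) : SimpleGraph (Fin k ⊕ Fin k) :=
  SimpleGraph.fromRel (fun x y =>
    match x, y with
    | Sum.inl i, Sum.inl j => (j : ℕ) = ((i : ℕ) + 1) % k
    | Sum.inr i, Sum.inl j => (j : ℕ) = (i : ℕ) ∨ (j : ℕ) = ((i : ℕ) + 1) % k
    | _, _ => False)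

section Fort
variable {V : Type*} {G : SimpleGraph V}

def IsFort (G : SimpleGraph V) (W : Set V) : Prop :=
  W.Nonempty ∧ ∀ v ∉ W, ∀ w ∈ W, G.Adj v w → ∃ w' ∈ W, w' ≠ w ∧ G.Adj v w'

theorem IsZeroForcingSet.nonempty_inter_of_isFort {S W : Set V} (hS : IsZeroForcingSet G S)
    (hW : IsFort G W) : (S ∩ W).Nonempty := by
  by_contra hSW
  have hclosed : forceStep G Wᶜ ⊆ Wᶜ := by
    rintro w (hw | ⟨v, hv, hvw, hforce⟩)
    · exact hw
    · intro hwW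
      obtain ⟨w', hw', hne, hvw'⟩ := hW.2 v hv w hwW hvw
      exact hne (hforce w' hvw' (not_not.2 hw'))
  obtain ⟨w, hw⟩ := hW.1
  have hS' : S ⊆ Wᶜ := fun x hxS hxW => hSW ⟨x, hxS, hxW⟩
  exact (hS Wᶜ hS' hclosed ▸ Set.mem_univ w : w ∈ Wᶜ) hw

theorem mem_of_forceStep_subset {T : Set V} (hT : forceStep G T ⊆ T) {v w : V} (hv : v ∈ T)
    (hvw : G.Adj v w) (hrest : ∀ x, G.Adj v x → x ≠ w → x ∈ T) : w ∈ T :=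
  hT (Or.inr ⟨v, hv, hvw, fun x hx hxT => by_contra fun hne => hxT (hrest x hx hne)⟩)

theorem zeroForcingNumber_eq_card [Fintype V] (S₀ : Finset V) (h₀ : IsZeroForcingSet G S₀)
    (hmin : ∀ S : Finset V, IsZeroForcingSet G S → S₀.card ≤ S.card) :
    zeroForcingNumber G = S₀.card :=
  le_antisymm (Nat.sInf_le ⟨S₀, rfl, h₀⟩)
    (le_csInf ⟨_, S₀, rfl, h₀⟩ (by rintro _ ⟨S, rfl, hS⟩; exact hmin S hS))

end Fort

section Cyclic
variable {k : ℕ} [NeZero k]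

theorem Fin.val_eq_add_one_mod_iff (i j : Fin k) :
    (j : ℕ) = ((i : ℕ) + 1) % k ↔ j = i + 1 := by
  rw [Fin.ext_iff, Fin.val_add, Fin.val_one', Nat.add_mod_mod]

theorem Fin.one_ne_zero_of_one_lt (hk : 1 < k) : (1 : Fin k) ≠ 0 := by
  rw [Ne, Fin.ext_iff, Fin.val_one', Fin.val_zero, Nat.mod_eq_of_lt hk]
  exact one_ne_zero

/-- For nonempty `A`, `p j` is the last element of `A` strictly before `j` in cyclic order. -/
def IsCyclicPrev (A : Set (Fin k)) (p : Fin k → Fin k) : Prop :=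
  ∀ j, (j ∈ A → p (j + 1) = j) ∧ (j ∉ A → p (j + 1) = p j)

open Fin.CommRing Fin.NatCast in
theorem exists_isCyclicPrev (A : Set (Fin k)) : ∃ p, IsCyclicPrev A p := by
  classical
  rcases A.eq_empty_or_nonempty with rfl | ⟨a, ha⟩
  · exact ⟨fun _ => 0, fun _ => ⟨False.elim, fun _ => rfl⟩⟩
  have hback : ∀ j : Fin k, ∃ r : ℕ, j - 1 - (r : Fin k) ∈ A := fun j =>
    ⟨(j - 1 - a).val, by rwa [Fin.cast_val_eq_self, sub_sub_cancel]⟩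
  refine ⟨fun j => j - 1 - (Nat.find (hback j) : Fin k),
    fun j => ⟨fun hj => ?_, fun hj => ?_⟩⟩
  · have hzero : Nat.find (hback (j + 1)) = 0 := Nat.find_eq_zero _ |>.2 (by simpa using hj)
    show j + 1 - 1 - _ = j
    rw [hzero, Nat.cast_zero, sub_zero, add_sub_cancel_right]
  · have hsucc : Nat.find (hback (j + 1)) = Nat.find (hback j) + 1 := by
      rw [Nat.find_eq_iff]
      refine ⟨?_, ?_⟩
      · convert Nat.find_spec (hback j) using 1
        push_cast; ring
      rintro (_ | r) hr
      · simpa using hj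
      · convert Nat.find_min (hback j) (by omega : r < _) using 2
        push_cast; ring
    simp only [hsucc]
    push_cast
    ring

end Cyclic

section Sun
variable {k : ℕ} [NeZero k]

theorem sunGraph_adj_inr (i : Fin k) (z : Fin k ⊕ Fin k) :
    (sunGraph k).Adj (.inr i) z ↔ z = .inl i ∨ z = .inl (i + 1) := by
  cases z <;> simp [sunGraph, Fin.val_eq_add_one_mod_iff, Fin.ext_iff, eq_comm]

theorem sunGraph_adj_inl (hk : 1 < k) (j : Fin k) (z : Fin k ⊕ Fin k) :
    (sunGraph k).Adj (.inl j) z ↔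
      z = .inl (j + 1) ∨ z = .inl (j - 1) ∨ z = .inr j ∨ z = .inr (j - 1) := by
  have h1 := Fin.one_ne_zero_of_one_lt hk
  cases z with
  | inl i =>
    simp only [sunGraph, fromRel_adj, Fin.val_eq_add_one_mod_iff, Fin.val_inj, ne_eq,
      Sum.inl.injEq, reduceCtorEq, or_false, eq_sub_iff_add_eq]
    constructor
    · rintro ⟨-, h | h⟩
      exacts [Or.inl h, Or.inr h.symm]
    · rintro (rfl | rfl)
      · exact ⟨fun h => h1 (by simpa using congrArg (· - j) h), Or.inl rfl⟩
      · exact ⟨fun h => h1 (by simpa using congrArg (· - i) h), Or.inr rfl⟩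
  | inr i =>
    simp only [sunGraph, fromRel_adj, Fin.val_eq_add_one_mod_iff, Fin.val_inj, ne_eq,
      reduceCtorEq, not_false_eq_true, false_or, true_and, Sum.inr.injEq, eq_sub_iff_add_eq]
    grind

/-- For `s ∈ A` and `t` the next element of `A` after `s`, this is
`{v_{s+1}, …, v_t, u_s, u_t}`. -/
def sunFort (A : Set (Fin k)) (p : Fin k → Fin k) (s : Fin k) : Set (Fin k ⊕ Fin k) :=
  {x | Sum.elim (fun j => p j = s) (fun a => a ∈ A ∧ (p a = s ∨ p (a + 1) = s)) x}

section
variable {A : Set (Fin k)} {p : Fin k → Fin k} {s : Fin k}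

@[simp] theorem inl_mem_sunFort {j : Fin k} : .inl j ∈ sunFort A p s ↔ p j = s := Iff.rfl

@[simp] theorem inr_mem_sunFort {a : Fin k} :
    .inr a ∈ sunFort A p s ↔ a ∈ A ∧ (p a = s ∨ p (a + 1) = s) := Iff.rfl

theorem isFort_sunFort (hk : 1 < k) (hp : IsCyclicPrev A p) (hs : s ∈ A) :
    IsFort (sunGraph k) (sunFort A p s) := by
  refine ⟨⟨.inr s, hs, Or.inr ((hp s).1 hs)⟩, ?_⟩
  rintro (j | a) hx w hw hadj
  · rw [inl_mem_sunFort] at hx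
    rcases (sunGraph_adj_inl hk j w).1 hadj with rfl | rfl | rfl | rfl
    · have hj : j ∈ A := by_contra fun hj => hx ((hp j).2 hj ▸ hw)
      exact ⟨.inr j, ⟨hj, Or.inr hw⟩, Sum.inr_ne_inl, (sunGraph_adj_inl hk j _).2 (by simp)⟩
    · have hj : j - 1 ∈ A := by_contra fun hj =>
        hx (by rw [← hw]; simpa using (hp (j - 1)).2 hj)
      exact ⟨.inr (j - 1), ⟨hj, Or.inl hw⟩, Sum.inr_ne_inl,
        (sunGraph_adj_inl hk j _).2 (by simp)⟩
    · have hs : p (j + 1) = s := (inr_mem_sunFort.1 hw).2.resolve_left hx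
      exact ⟨.inl (j + 1), hs, Sum.inl_ne_inr, (sunGraph_adj_inl hk j _).2 (by simp)⟩
    · have hs : p (j - 1) = s := (inr_mem_sunFort.1 hw).2.resolve_right (by simpa using hx)
      exact ⟨.inl (j - 1), hs, Sum.inl_ne_inr, (sunGraph_adj_inl hk j _).2 (by simp)⟩
  · by_cases ha : a ∈ A
    · rcases (sunGraph_adj_inr a w).1 hadj with rfl | rfl
      exacts [absurd ⟨ha, Or.inl hw⟩ hx, absurd ⟨ha, Or.inr hw⟩ hx]
    · have hne : (Sum.inl a : Fin k ⊕ Fin k) ≠ .inl (a + 1) := by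
        simp [Fin.one_ne_zero_of_one_lt hk]
      rcases (sunGraph_adj_inr a w).1 hadj with rfl | rfl
      · exact ⟨.inl (a + 1), ((hp a).2 ha).trans hw, hne.symm,
          (sunGraph_adj_inr a _).2 (Or.inr rfl)⟩
      · exact ⟨.inl a, ((hp a).2 ha).symm.trans hw, hne, (sunGraph_adj_inr a _).2 (Or.inl rfl)⟩

end

theorem card_le_of_isZeroForcingSet_sunGraph (hk : 1 < k) {S : Finset (Fin k ⊕ Fin k)}
    (hS : IsZeroForcingSet (sunGraph k) S) : k ≤ S.card := by
  set A : Finset (Fin k) := S.toRightᶜ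
  obtain ⟨p, hp⟩ := exists_isCyclicPrev (A : Set (Fin k))
  have hA : A ⊆ S.toLeft.image p := by
    intro s hs
    obtain ⟨x | a, hxS, hxW⟩ := hS.nonempty_inter_of_isFort (isFort_sunFort hk hp hs)
    · exact Finset.mem_image.2 ⟨x, Finset.mem_toLeft.2 hxS, hxW⟩
    · exact absurd (Finset.mem_toRight.2 hxS) (Finset.mem_compl.1 hxW.1)
  calc k = A.card + S.toRight.card := by
        have := Finset.card_le_univ S.toRight
        rw [Finset.card_compl, Fintype.card_fin] at *
        omega
    _ ≤ S.toLeft.card + S.toRight.card := by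
        grw [Finset.card_le_card hA, Finset.card_image_le]
    _ = S.card := Finset.card_toLeft_add_card_toRight

end Sun

def sunSeed (n : ℕ) : Finset (Fin (n + 1) ⊕ Fin (n + 1)) :=
  insert (.inl 0) ((Finset.univ.erase (Fin.last n)).map .inr)

theorem card_sunSeed (n : ℕ) : (sunSeed n).card = n + 1 := by
  simp [sunSeed]

theorem isZeroForcingSet_sunSeed {n : ℕ} (hn : 0 < n) :
    IsZeroForcingSet (sunGraph (n + 1)) (sunSeed n) := by
  intro T hST hT
  have hR : ∀ i, i ≠ Fin.last n → .inr i ∈ T := fun i hi => hST (by simp [sunSeed, hi])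
  have hL : ∀ j, .inl j ∈ T := by
    intro j
    induction j using Fin.induction with
    | zero => exact hST (by simp [sunSeed])
    | succ i ih =>
      rw [← Fin.coeSucc_eq_succ]
      refine mem_of_forceStep_subset hT (hR _ (Fin.castSucc_lt_last i).ne)
        ((sunGraph_adj_inr _ _).2 (Or.inr rfl)) fun x hx hne => ?_
      rcases (sunGraph_adj_inr _ _).1 hx with rfl | rfl
      exacts [ih, absurd rfl hne]
  have hlast : Fin.last n = 0 - 1 := by
    rw [zero_sub]; exact eq_neg_of_add_eq_zero_left (Fin.last_add_one n)
  have hR_last : .inr (Fin.last n) ∈ T := by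
    refine mem_of_forceStep_subset hT (hL 0)
      ((sunGraph_adj_inl (by omega) _ _).2 (by simp [hlast])) fun x hx hne => ?_
    rcases (sunGraph_adj_inl (by omega) _ _).1 hx with rfl | rfl | rfl | rfl
    · exact hL _
    · exact hL _
    · exact hR _ (by simp [Fin.ext_iff]; omega)
    · exact absurd (by rw [hlast]) hne
  ext (j | i)
  · simpa using hL j
  · simpa using (eq_or_ne i (Fin.last n)).elim (· ▸ hR_last) (hR i)

/-- For the sun graph `S_k` on `n = 2k` vertices (`k ≥ 3`), the zero
forcing number equals `k = n / 2`. -/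
theorem zeroForcingNumber_sunGraph (k : ℕ) (hk : 3 ≤ k) :
    zeroForcingNumber (sunGraph k) = k ∧
    zeroForcingNumber (sunGraph k) = Fintype.card (Fin k ⊕ Fin k) / 2 := by
  obtain ⟨n, rfl⟩ : ∃ n, k = n + 1 := ⟨k - 1, by omega⟩
  have hZ : zeroForcingNumber (sunGraph (n + 1)) = n + 1 := by
    refine (zeroForcingNumber_eq_card _ (isZeroForcingSet_sunSeed (by omega)) ?_).trans
      (card_sunSeed n)
    exact fun S hS => (card_sunSeed n).trans_le
      (card_le_of_isZeroForcingSet_sunGraph (by omega) hS)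
  refine ⟨hZ, ?_⟩
  rw [hZ, Fintype.card_sum, Fintype.card_fin]
  omega
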